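/- Let {τ_j}_{j=1}^n be unit vectors in ℝ^d with ⟨τ_j, τ_k⟩ ≤ cos θ for all j ≠ k, and suppose c > 0 and φ : [-1,1] → ℝ satisfy ∑_{j,k} φ(⟨τ_j, τ_k⟩) ≥ 0, φ(r) + c ≤ 0 for all r ∈ [-1, cos θ], and φ(1) + c ≤ 1. Then n ≤ 1/c. -/

import Mathlib

/-! Bound the double sum entrywise: the `n` diagonal terms are `φ 1 ≤ 1 - c` and the
`n² - n` off-diagonal terms are at most `-c`. Hence `0 ≤ ∑ⱼ ∑ₖ φ ⟪τⱼ, τₖ⟫ ≤ n (1 - c) - (n² - n) c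
= n - n² c`, i.e. `n c ≤ 1`. -/

open scoped RealInnerProductSpace

open Finset

theorem sum_sum_le_of_diag_le_of_offDiag_le {ι : Type*} [Fintype ι] [DecidableEq ι]
    (f : ι → ι → ℝ) {a b : ℝ} (hdiag : ∀ j, f j j ≤ a) (hoff : ∀ j k, j ≠ k → f j k ≤ b) :
    ∑ j, ∑ k, f j k ≤ Fintype.card ι * (a - b) + Fintype.card ι ^ 2 * b := by
  have hentry : ∀ j k, f j k ≤ (if j = k then a - b else 0) + b := by
    intro j k
    by_cases h : j = k
    · subst h; simp only [if_true]; linarith [hdiag j]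
    · simp only [h, if_false, zero_add]; exact hoff j k h
  calc ∑ j, ∑ k, f j k
      ≤ ∑ j : ι, ∑ k : ι, ((if j = k then a - b else 0) + b) :=
        sum_le_sum fun j _ => sum_le_sum fun k _ => hentry j k
    _ = Fintype.card ι * (a - b) + Fintype.card ι ^ 2 * b := by
        simp only [sum_add_distrib, sum_ite_eq, mem_univ, if_true, sum_const, card_univ,
          nsmul_eq_mul]
        ring

theorem card_le_one_div_of_sum_nonneg {E ι : Type*} [NormedAddCommGroup E]
    [InnerProductSpace ℝ E] [Fintype ι] (τ : ι → E) (hunit : ∀ j, ‖τ j‖ = 1) {t : ℝ}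
    (hcode : ∀ j k, j ≠ k → ⟪τ j, τ k⟫ ≤ t) {c : ℝ} (hc : 0 < c) (φ : ℝ → ℝ)
    (h1 : 0 ≤ ∑ j, ∑ k, φ ⟪τ j, τ k⟫)
    (h2 : ∀ r : ℝ, -1 ≤ r → r ≤ t → φ r + c ≤ 0)
    (h3 : φ 1 + c ≤ 1) :
    (Fintype.card ι : ℝ) ≤ 1 / c := by
  classical
  have hsum := sum_sum_le_of_diag_le_of_offDiag_le (fun j k => φ ⟪τ j, τ k⟫) (a := φ 1) (b := -c)
    (fun j => by rw [inner_self_eq_one_of_norm_eq_one (hunit j)])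
    (fun j k hjk => by
      linarith [h2 _ (neg_one_le_real_inner_of_norm_eq_one (hunit j) (hunit k)) (hcode j k hjk)])
  set n : ℝ := (Fintype.card ι : ℝ)
  have hn : 0 ≤ n := Nat.cast_nonneg _
  have hquad : n * (n * c) ≤ n * 1 := by nlinarith
  rw [le_div_iff₀ hc]
  rcases hn.eq_or_lt with hn0 | hnpos
  · rw [← hn0]; norm_num
  · exact le_of_mul_le_mul_left hquad hnpos

theorem pfender_bound_one_over_c {d n : ℕ} (θ : ℝ) (τ : Fin n → EuclideanSpace ℝ (Fin d))
    (hunit : ∀ j, ‖τ j‖ = 1)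
    (hcode : ∀ j k, j ≠ k → ⟪τ j, τ k⟫ ≤ Real.cos θ)
    (c : ℝ) (hc : 0 < c) (φ : ℝ → ℝ)
    (h1 : 0 ≤ ∑ j, ∑ k, φ ⟪τ j, τ k⟫)
    (h2 : ∀ r : ℝ, -1 ≤ r → r ≤ Real.cos θ → φ r + c ≤ 0)
    (h3 : φ 1 + c ≤ 1) :
    (n : ℝ) ≤ 1 / c := by
  simpa using card_le_one_div_of_sum_nonneg τ hunit hcode hc φ h1 h2 h3
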